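/- Let 𝒢 be the path graph on 4 vertices labeled 1,2,3,4 in order, let β = 0, and consider the ARW chain on configurations with the metric ρ induced by the graph ℋ in which configurations x and x − e_a + e_b are adjacent (at distance contribution 1) exactly when a ~ b in 𝒢. Then for the adjacent configurations x and y = x − e_2 + e_3 (with x(2) ≥ 1), the Wasserstein distance satisfies W_ρ^P(x,y) ≥ 1 = ρ(x,y); i.e., no coupling of one step of the two chains strictly contracts ρ. -/

import Mathlib

namespace ARW

open Finset

variable {V : Type*} [Fintype V] [DecidableEq V]

/-- Number of particles at vertex `v` in configuration `x`. -/
def cnt {n : ℕ} (x : Sym V n) (v : V) : ℕ := Multiset.count v (x : Multiset V)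

/-- Normalization constant `Z` for a particle at vertex `i`. -/
noncomputable def Zf (G : SimpleGraph V) [DecidableRel G.Adj] (β : ℝ) (n : ℕ)
    (x : V → ℕ) (i : V) : ℝ :=
  (∑ l ∈ G.neighborFinset i, Real.exp (β / n * x l)) + Real.exp (β / n * ((x i : ℝ) - 1))

/-- Single-particle transition probability `P_x(i,j)` of the ARW model. -/
noncomputable def stepP (G : SimpleGraph V) [DecidableRel G.Adj] (β : ℝ) (n : ℕ)
    (x : V → ℕ) (i j : V) : ℝ :=
  if G.Adj i j then Real.exp (β / n * x j) / Zf G β n x i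
  else if i = j then Real.exp (β / n * ((x i : ℝ) - 1)) / Zf G β n x i
  else 0

/-- Transition matrix of the Attracting Random Walks chain on configurations of
`n` particles (elements of `Sym V n`). -/
noncomputable def arwP (G : SimpleGraph V) [DecidableRel G.Adj] (β : ℝ) (n : ℕ)
    (x y : Sym V n) : ℝ :=
  ∑ i, ∑ j, ((cnt x i : ℝ) / n) * stepP G β n (cnt x) i j *
    (if (y : Multiset V) = j ::ₘ ((x : Multiset V).erase i) then 1 else 0)

/-- `t`-step transition probabilities of a kernel `P`. -/
noncomputable def iterP {S : Type*} [Fintype S] [DecidableEq S] (P : S → S → ℝ) :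
    ℕ → S → S → ℝ
  | 0 => fun x y => if x = y then 1 else 0
  | t + 1 => fun x y => ∑ z, iterP P t x z * P z y

/-- Total variation distance between two (densities of) measures on a finite set. -/
noncomputable def tv {S : Type*} [Fintype S] (μ ν : S → ℝ) : ℝ :=
  (1 / 2) * ∑ s, |μ s - ν s|

/-- `π` is a stationary distribution of the kernel `P`. -/
def IsStationary {S : Type*} [Fintype S] (P : S → S → ℝ) (π : S → ℝ) : Prop :=
  (∀ s, 0 ≤ π s) ∧ (∑ s, π s = 1) ∧ (∀ y, ∑ x, π x * P x y = π y)

/-- Worst-case total variation distance to stationarity at time `t`. -/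
noncomputable def tvd {S : Type*} [Fintype S] [DecidableEq S] (P : S → S → ℝ)
    (π : S → ℝ) (t : ℕ) : ℝ :=
  ⨆ x : S, tv (iterP P t x) π

/-- Mixing time `t_mix(ε)`. -/
noncomputable def tmix {S : Type*} [Fintype S] [DecidableEq S] (P : S → S → ℝ)
    (π : S → ℝ) (ε : ℝ) : ℕ :=
  sInf {t : ℕ | tvd P π t ≤ ε}

/-- The path graph on 4 vertices `0 — 1 — 2 — 3` (the paper's labels `1,2,3,4`). -/
def pathG4 : SimpleGraph (Fin 4) where
  Adj a b := (a : ℕ) + 1 = b ∨ (b : ℕ) + 1 = a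
  symm := ⟨fun a b h => Or.symm h⟩
  loopless := ⟨fun a h => by omega⟩

instance : DecidableRel pathG4.Adj :=
  fun a b => inferInstanceAs (Decidable ((a : ℕ) + 1 = b ∨ (b : ℕ) + 1 = a))

/-- The path metric `ρ` on configurations induced by the graph `ℋ` on configurations in
which `x` and `x − e_a + e_b` are adjacent (with edge length `1`) exactly when `a ~ b`
in the underlying graph. -/
noncomputable def rhoUnit (n : ℕ) (x y : Sym (Fin 4) n) : ℝ :=
  sInf {L : ℝ | ∃ (m : ℕ) (c : ℕ → Sym (Fin 4) n) (a b : ℕ → Fin 4),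
    c 0 = x ∧ c m = y ∧
    (∀ t < m, pathG4.Adj (a t) (b t) ∧
      ((c (t + 1) : Multiset (Fin 4)) = b t ::ₘ ((c t : Multiset (Fin 4)).erase (a t)))) ∧
    L = (m : ℝ)}

/-- The Wasserstein distance `W_ρ^P(x,y)`: the infimum of `𝔼[ρ(X₁,Y₁)]` over couplings
`K` of `X₁ ~ P(x,·)` and `Y₁ ~ P(y,·)`. -/
noncomputable def wass {S : Type*} [Fintype S] (Q : S → S → ℝ) (ρ : S → S → ℝ)
    (x y : S) : ℝ :=
  sInf {w : ℝ | ∃ K : S → S → ℝ, (∀ a b, 0 ≤ K a b) ∧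
    (∀ a, ∑ b, K a b = Q x a) ∧ (∀ b, ∑ a, K a b = Q y b) ∧
    w = ∑ a, ∑ b, K a b * ρ a b}

/-! ### Auxiliary material for the no-contraction theorem -/

lemma pathG4_adj (a b : Fin 4) :
    pathG4.Adj a b ↔ ((a : ℕ) + 1 = b ∨ (b : ℕ) + 1 = a) := Iff.rfl

lemma card_nbr (i : Fin 4) : (pathG4.neighborFinset i).card = ![1,2,2,1] i := by
  fin_cases i <;> decide

lemma Zf_eq (n : ℕ) (xc : Fin 4 → ℕ) (i : Fin 4) :
    Zf pathG4 0 n xc i = (![1,2,2,1] i : ℕ) + 1 := by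
  rw [Zf, ← card_nbr]
  simp only [zero_div, zero_mul, Real.exp_zero, Finset.sum_const, nsmul_eq_mul, mul_one]

/-- Linear potential on vertices. -/
def phi (v : Fin 4) : ℝ := (v : ℕ)

lemma fin3 : ((3 : Fin 4) : ℕ) = 3 := rfl

noncomputable def driftV : Fin 4 → ℝ := ![1/2, 0, 0, -(1/2)]

lemma stepP_nonneg (n : ℕ) (xc : Fin 4 → ℕ) (i j : Fin 4) :
    0 ≤ stepP pathG4 0 n xc i j := by
  rw [stepP, Zf_eq]
  split_ifs <;> positivity

lemma stepP_row (n : ℕ) (xc : Fin 4 → ℕ) (i : Fin 4) :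
    ∑ j, stepP pathG4 0 n xc i j = 1 := by
  fin_cases i <;>
    simp (config := { decide := true }) [stepP, Zf_eq, pathG4_adj, Fin.sum_univ_four,
      Real.exp_zero] <;> norm_num

lemma stepP_drift (n : ℕ) (xc : Fin 4 → ℕ) (i : Fin 4) :
    ∑ j, stepP pathG4 0 n xc i j * (phi j - phi i) = driftV i := by
  fin_cases i <;>
    simp (config := { decide := true }) [stepP, Zf_eq, pathG4_adj, Fin.sum_univ_four,
      Real.exp_zero, phi, fin3, driftV] <;> norm_num

/-- Sum of the potential over a configuration (as a multiset). -/
noncomputable def fM (m : Multiset (Fin 4)) : ℝ := (m.map phi).sum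

lemma fM_cons (b : Fin 4) (m : Multiset (Fin 4)) : fM (b ::ₘ m) = phi b + fM m := by
  simp [fM]

lemma fM_erase {a : Fin 4} {m : Multiset (Fin 4)} (h : a ∈ m) :
    fM (m.erase a) = fM m - phi a := by
  have h2 := fM_cons a (m.erase a)
  rw [Multiset.cons_erase h] at h2
  linarith

lemma fM_move {a : Fin 4} {m : Multiset (Fin 4)} (b : Fin 4) (h : a ∈ m) :
    fM (b ::ₘ m.erase a) = fM m + phi b - phi a := by
  rw [fM_cons, fM_erase h]; ring

lemma adj_phi {a b : Fin 4} (h : pathG4.Adj a b) :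
    phi b - phi a = 1 ∨ phi b - phi a = -1 := by
  rcases h with h | h
  · left; rw [phi, phi, ← h]; push_cast; ring
  · right; rw [phi, phi, ← h]; push_cast; ring

lemma symCard {n : ℕ} (z : Sym (Fin 4) n) : Multiset.card (z : Multiset (Fin 4)) = n := z.2

lemma step_mem {n : ℕ} {c c' : Sym (Fin 4) n} {a b : Fin 4}
    (h : (c' : Multiset (Fin 4)) = b ::ₘ (c : Multiset (Fin 4)).erase a) :
    a ∈ (c : Multiset (Fin 4)) := by
  by_contra ha
  have h1 : ((c : Multiset (Fin 4)).erase a) = (c : Multiset (Fin 4)) :=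
    Multiset.erase_of_notMem ha
  have h2 := symCard c'
  rw [h, h1, Multiset.card_cons, symCard c] at h2
  omega

lemma chain_bound {n : ℕ} (m : ℕ) (c : ℕ → Sym (Fin 4) n) (A B : ℕ → Fin 4)
    (hs : ∀ t < m, pathG4.Adj (A t) (B t) ∧
      ((c (t + 1) : Multiset (Fin 4)) = B t ::ₘ ((c t : Multiset (Fin 4)).erase (A t)))) :
    fM (c m : Multiset (Fin 4)) - fM (c 0 : Multiset (Fin 4)) ≤ m := by
  induction m with
  | zero => simp
  | succ k ih =>
    have hk := hs k (by omega)
    have hmem := step_mem hk.2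
    have hstep : fM (c (k+1) : Multiset (Fin 4))
        = fM (c k : Multiset (Fin 4)) + phi (B k) - phi (A k) := by
      rw [hk.2, fM_move _ hmem]
    have hih := ih (fun t ht => hs t (by omega))
    have hphi := adj_phi hk.1
    push_cast at hih ⊢
    rcases hphi with h | h <;> linarith

/-- Connectivity of configurations under single-particle moves along edges. -/
def Conn {n : ℕ} (a b : Sym (Fin 4) n) : Prop :=
  ∃ (m : ℕ) (c : ℕ → Sym (Fin 4) n) (A B : ℕ → Fin 4),
    c 0 = a ∧ c m = b ∧
    (∀ t < m, pathG4.Adj (A t) (B t) ∧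
      ((c (t + 1) : Multiset (Fin 4)) = B t ::ₘ ((c t : Multiset (Fin 4)).erase (A t))))

lemma conn_refl {n : ℕ} (a : Sym (Fin 4) n) : Conn a a :=
  ⟨0, fun _ => a, fun _ => 0, fun _ => 0, rfl, rfl, fun t ht => absurd ht (by omega)⟩

lemma conn_trans {n : ℕ} {a b d : Sym (Fin 4) n} (h1 : Conn a b) (h2 : Conn b d) :
    Conn a d := by
  obtain ⟨m1, c1, A1, B1, h10, h1m, h1s⟩ := h1
  obtain ⟨m2, c2, A2, B2, h20, h2m, h2s⟩ := h2
  refine ⟨m1 + m2, fun t => if t < m1 then c1 t else c2 (t - m1),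
    fun t => if t < m1 then A1 t else A2 (t - m1),
    fun t => if t < m1 then B1 t else B2 (t - m1), ?_, ?_, ?_⟩
  · by_cases h : 0 < m1
    · simpa [h] using h10
    · have hm1 : m1 = 0 := by omega
      have hab : a = b := by rw [← h10, ← h1m, hm1]
      simp [h, hab, h20]
  · have h : ¬ (m1 + m2 < m1) := by omega
    simp only [h, if_false]
    rw [show m1 + m2 - m1 = m2 by omega, h2m]
  · intro t ht
    rcases lt_or_ge t m1 with h | h
    · have hc : (if t + 1 < m1 then c1 (t+1) else c2 (t+1-m1)) = c1 (t+1) := by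
        rcases lt_or_ge (t+1) m1 with hl | hl
        · rw [if_pos hl]
        · have he : t + 1 = m1 := by omega
          rw [if_neg (by omega), show t+1-m1 = 0 by omega, h20, ← h1m, he]
      simp only [if_pos h, hc]
      exact h1s t h
    · have h2lt : t - m1 < m2 := by omega
      have hn1 : ¬ (t < m1) := by omega
      have hn2 : ¬ (t + 1 < m1) := by omega
      simp only [if_neg hn1, if_neg hn2, show t+1-m1 = (t-m1)+1 by omega]
      exact h2s (t - m1) h2lt

lemma move_symm {n : ℕ} {c c' : Sym (Fin 4) n} {a b : Fin 4}
    (h : (c' : Multiset (Fin 4)) = b ::ₘ (c : Multiset (Fin 4)).erase a) :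
    (c : Multiset (Fin 4)) = a ::ₘ (c' : Multiset (Fin 4)).erase b := by
  have hmem := step_mem h
  rw [h, Multiset.erase_cons_head, Multiset.cons_erase hmem]

lemma conn_symm {n : ℕ} {a b : Sym (Fin 4) n} (h : Conn a b) : Conn b a := by
  obtain ⟨m, c, A, B, h0, hm, hs⟩ := h
  refine ⟨m, fun t => c (m - t), fun t => B (m - 1 - t), fun t => A (m - 1 - t),
    by simpa using hm, by simpa [Nat.sub_self] using h0, ?_⟩
  intro t ht
  have hlt : m - 1 - t < m := by omega
  obtain ⟨hadj, hmv⟩ := hs (m - 1 - t) hlt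
  refine ⟨hadj.symm, ?_⟩
  show (c (m - (t+1)) : Multiset (Fin 4))
      = A (m - 1 - t) ::ₘ ((c (m - t) : Multiset (Fin 4))).erase (B (m - 1 - t))
  rw [show m - (t+1) = m - 1 - t by omega, show m - t = (m - 1 - t) + 1 by omega]
  exact move_symm hmv

/-- The configuration with all particles at vertex `0`. -/
def botC (n : ℕ) : Sym (Fin 4) n := ⟨Multiset.replicate n 0, by simp⟩

/-- Total potential (as a natural number). -/
def wN {n : ℕ} (a : Sym (Fin 4) n) : ℕ :=
  ((a : Multiset (Fin 4)).map (fun v : Fin 4 => (v : ℕ))).sum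

lemma wN_zero {n : ℕ} {a : Sym (Fin 4) n} (h : wN a = 0) : a = botC n := by
  apply Subtype.ext
  apply Multiset.eq_replicate.2
  refine ⟨symCard a, fun v hv => ?_⟩
  have hz := Multiset.sum_eq_zero_iff.1 h ((v : ℕ))
    (Multiset.mem_map_of_mem (f := fun w : Fin 4 => (w : ℕ)) hv)
  exact Fin.ext (by simpa using hz)

lemma conn_bot {n : ℕ} (k : ℕ) : ∀ (a : Sym (Fin 4) n), wN a ≤ k → Conn a (botC n) := by
  induction k with
  | zero =>
    intro a ha
    rw [wN_zero (Nat.le_zero.1 ha)]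
    exact conn_refl _
  | succ k ih =>
    intro a ha
    by_cases h0 : wN a = 0
    · rw [wN_zero h0]; exact conn_refl _
    · have hex : ∃ u ∈ (a : Multiset (Fin 4)).map (fun v : Fin 4 => (v : ℕ)), u ≠ 0 := by
        by_contra hc
        push_neg at hc
        exact h0 (Multiset.sum_eq_zero_iff.2 hc)
      obtain ⟨u, hu, hu0⟩ := hex
      obtain ⟨v, hv, hvu⟩ := Multiset.mem_map.1 hu
      have hv0 : (v : ℕ) ≠ 0 := by rw [hvu]; exact hu0
      have hvlt : (v : ℕ) < 4 := v.isLt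
      have hn : 0 < n := by
        have := Multiset.card_pos_iff_exists_mem.2 ⟨v, hv⟩
        rwa [symCard a] at this
      set v' : Fin 4 := ⟨(v : ℕ) - 1, by omega⟩ with hv'def
      have hadj : pathG4.Adj v v' := by
        rw [pathG4_adj]; right
        show ((v : ℕ) - 1) + 1 = (v : ℕ)
        omega
      have hcard : Multiset.card (v' ::ₘ (a : Multiset (Fin 4)).erase v) = n := by
        rw [Multiset.card_cons, Multiset.card_erase_of_mem hv, symCard a]
        exact Nat.succ_pred_eq_of_pos hn
      set a' : Sym (Fin 4) n := ⟨v' ::ₘ (a : Multiset (Fin 4)).erase v, hcard⟩ with ha'def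
      have hstep : Conn a a' := by
        refine ⟨1, fun t => if t = 0 then a else a', fun _ => v, fun _ => v',
          by simp, by simp, ?_⟩
        intro t ht
        have ht0 : t = 0 := by omega
        subst ht0
        exact ⟨hadj, by simp [ha'def]⟩
      have hwa : wN a = (v : ℕ) + (((a : Multiset (Fin 4)).erase v).map (fun w : Fin 4 => (w : ℕ))).sum := by
        rw [wN]
        conv_lhs => rw [← Multiset.cons_erase hv]
        rw [Multiset.map_cons, Multiset.sum_cons]
      have hwa' : wN a' = ((v : ℕ) - 1) + (((a : Multiset (Fin 4)).erase v).map (fun w : Fin 4 => (w : ℕ))).sum := by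
        have hcoe : (a' : Multiset (Fin 4)) = v' ::ₘ (a : Multiset (Fin 4)).erase v := rfl
        rw [wN, hcoe, Multiset.map_cons, Multiset.sum_cons]
      have hle : wN a' ≤ k := by omega
      exact conn_trans hstep (ih a' hle)

lemma conn_all {n : ℕ} (a b : Sym (Fin 4) n) : Conn a b :=
  conn_trans (conn_bot (wN a) a le_rfl) (conn_symm (conn_bot (wN b) b le_rfl))

lemma rho_lb {n : ℕ} (a b : Sym (Fin 4) n) :
    fM (b : Multiset (Fin 4)) - fM (a : Multiset (Fin 4)) ≤ rhoUnit n a b := by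
  rw [rhoUnit]
  apply le_csInf
  · obtain ⟨m, c, A, B, h0, hm, hs⟩ := conn_all a b
    exact ⟨m, m, c, A, B, h0, hm, hs, rfl⟩
  · rintro L ⟨m, c, A, B, h0, hm, hs, rfl⟩
    have hcb := chain_bound m c A B hs
    rw [h0, hm] at hcb
    exact hcb

lemma sum_sym_ind {n : ℕ} (M : Multiset (Fin 4)) (f : Sym (Fin 4) n → ℝ) :
    ∑ z : Sym (Fin 4) n, (if (z : Multiset (Fin 4)) = M then 1 else 0) * f z
      = if h : Multiset.card M = n then f ⟨M, h⟩ else 0 := by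
  classical
  split_ifs with h
  · have hval : ∑ z : Sym (Fin 4) n, (if z = (⟨M, h⟩ : Sym (Fin 4) n) then 1 else 0) * f z
        = f ⟨M, h⟩ := by
      exact (Fintype.sum_eq_single (α := Sym (Fin 4) n)
        (f := fun z => (if z = (⟨M, h⟩ : Sym (Fin 4) n) then 1 else 0) * f z) ⟨M, h⟩
        (fun z hz => by simp only [if_neg hz, zero_mul])).trans (by
          exact (congrArg (· * f ⟨M, h⟩) (if_pos rfl)).trans (one_mul _))
    rw [← hval]
    apply Finset.sum_congr rfl
    intro z _
    congr 1
    apply if_congr _ rfl rfl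
    constructor
    · intro hz; exact Subtype.ext hz
    · intro hz; subst hz; rfl
  · apply Finset.sum_eq_zero
    intro z _
    rw [if_neg, zero_mul]
    intro hz
    exact h (by rw [← hz]; exact symCard z)

lemma arw_expect {n : ℕ} (hn : 0 < n) (w : Sym (Fin 4) n) (f : Sym (Fin 4) n → ℝ)
    (g : Fin 4 → Fin 4 → ℝ)
    (hfg : ∀ (i : Fin 4), i ∈ (w : Multiset (Fin 4)) → ∀ (j : Fin 4)
      (hc : Multiset.card (j ::ₘ (w : Multiset (Fin 4)).erase i) = n),
      f ⟨j ::ₘ (w : Multiset (Fin 4)).erase i, hc⟩ = g i j) :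
    ∑ z : Sym (Fin 4) n, arwP pathG4 0 n w z * f z
      = ∑ i, ((cnt w i : ℝ) / n) * ∑ j, stepP pathG4 0 n (cnt w) i j * g i j := by
  calc ∑ z : Sym (Fin 4) n, arwP pathG4 0 n w z * f z
      = ∑ z : Sym (Fin 4) n, ∑ i, ∑ j, ((cnt w i : ℝ) / n) * stepP pathG4 0 n (cnt w) i j *
          ((if (z : Multiset (Fin 4)) = j ::ₘ ((w : Multiset (Fin 4)).erase i) then 1 else 0)
            * f z) := by
        apply Finset.sum_congr rfl; intro z _
        rw [arwP, Finset.sum_mul]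
        apply Finset.sum_congr rfl; intro i _
        rw [Finset.sum_mul]
        apply Finset.sum_congr rfl; intro j _
        ring
    _ = ∑ i, ∑ j, ((cnt w i : ℝ) / n) * stepP pathG4 0 n (cnt w) i j *
          (∑ z : Sym (Fin 4) n,
            (if (z : Multiset (Fin 4)) = j ::ₘ ((w : Multiset (Fin 4)).erase i) then 1 else 0)
              * f z) := by
        rw [Finset.sum_comm]
        apply Finset.sum_congr rfl; intro i _
        rw [Finset.sum_comm]
        apply Finset.sum_congr rfl; intro j _
        rw [Finset.mul_sum]
    _ = ∑ i, ∑ j, ((cnt w i : ℝ) / n) * stepP pathG4 0 n (cnt w) i j * g i j := by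
        apply Finset.sum_congr rfl; intro i _
        by_cases hi : i ∈ (w : Multiset (Fin 4))
        · apply Finset.sum_congr rfl; intro j _
          congr 1
          have hc : Multiset.card (j ::ₘ (w : Multiset (Fin 4)).erase i) = n := by
            rw [Multiset.card_cons, Multiset.card_erase_of_mem hi, symCard w]
            exact Nat.succ_pred_eq_of_pos hn
          rw [sum_sym_ind, dif_pos hc]
          exact hfg i hi j hc
        · have h0 : (cnt w i : ℝ) = 0 := by
            rw [cnt, Multiset.count_eq_zero.2 hi]; simp
          simp [h0]
    _ = ∑ i, ((cnt w i : ℝ) / n) * ∑ j, stepP pathG4 0 n (cnt w) i j * g i j := by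
        apply Finset.sum_congr rfl; intro i _
        rw [Finset.mul_sum]
        apply Finset.sum_congr rfl; intro j _
        ring

lemma cnt_total {n : ℕ} (w : Sym (Fin 4) n) : ∑ i, (cnt w i : ℝ) = n := by
  have h : ∑ i : Fin 4, Multiset.count i (w : Multiset (Fin 4)) = n := by
    rw [Multiset.sum_count_eq_card (fun a _ => Finset.mem_univ a), symCard w]
  calc ∑ i, (cnt w i : ℝ) = ((∑ i : Fin 4, Multiset.count i (w : Multiset (Fin 4)) : ℕ) : ℝ) := by
        push_cast [cnt]; rfl
    _ = n := by rw [h]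

lemma arw_row {n : ℕ} (hn : 0 < n) (w : Sym (Fin 4) n) :
    ∑ z : Sym (Fin 4) n, arwP pathG4 0 n w z = 1 := by
  have h := arw_expect hn w (fun _ => (1 : ℝ)) (fun _ _ => (1 : ℝ)) (fun _ _ _ _ => rfl)
  simp only [mul_one] at h
  rw [h]
  have hrow : ∀ i : Fin 4, ∑ j, stepP pathG4 0 n (cnt w) i j = 1 := stepP_row n (cnt w)
  calc ∑ i, ((cnt w i : ℝ) / n) * ∑ j, stepP pathG4 0 n (cnt w) i j
      = ∑ i, ((cnt w i : ℝ) / n) := by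
        apply Finset.sum_congr rfl; intro i _; rw [hrow i, mul_one]
    _ = (∑ i, (cnt w i : ℝ)) / n := by rw [Finset.sum_div]
    _ = 1 := by
        rw [cnt_total w]
        exact div_self (Nat.cast_ne_zero.2 hn.ne')

lemma arw_nonneg {n : ℕ} (w z : Sym (Fin 4) n) : 0 ≤ arwP pathG4 0 n w z := by
  rw [arwP]
  apply Finset.sum_nonneg; intro i _
  apply Finset.sum_nonneg; intro j _
  have hs := stepP_nonneg n (cnt w) i j
  refine mul_nonneg (mul_nonneg (by positivity) hs) ?_
  split_ifs <;> norm_num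

lemma exp_fM {n : ℕ} (hn : 0 < n) (w : Sym (Fin 4) n) :
    ∑ z : Sym (Fin 4) n, arwP pathG4 0 n w z * fM (z : Multiset (Fin 4))
      = fM (w : Multiset (Fin 4)) + (∑ i, (cnt w i : ℝ) * driftV i) / n := by
  have h := arw_expect hn w (fun z => fM (z : Multiset (Fin 4)))
    (fun i j => fM (w : Multiset (Fin 4)) + phi j - phi i)
    (fun i hi j hc => fM_move j hi)
  rw [h]
  have hinner : ∀ i : Fin 4,
      ∑ j, stepP pathG4 0 n (cnt w) i j * (fM (w : Multiset (Fin 4)) + phi j - phi i)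
        = fM (w : Multiset (Fin 4)) + driftV i := by
    intro i
    calc ∑ j, stepP pathG4 0 n (cnt w) i j * (fM (w : Multiset (Fin 4)) + phi j - phi i)
        = ∑ j, (stepP pathG4 0 n (cnt w) i j * fM (w : Multiset (Fin 4))
            + stepP pathG4 0 n (cnt w) i j * (phi j - phi i)) := by
          apply Finset.sum_congr rfl; intro j _; ring
      _ = (∑ j, stepP pathG4 0 n (cnt w) i j) * fM (w : Multiset (Fin 4))
            + ∑ j, stepP pathG4 0 n (cnt w) i j * (phi j - phi i) := by
          rw [Finset.sum_add_distrib, Finset.sum_mul]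
      _ = fM (w : Multiset (Fin 4)) + driftV i := by
          rw [stepP_row, stepP_drift, one_mul]
  calc ∑ i, ((cnt w i : ℝ) / n) * ∑ j, stepP pathG4 0 n (cnt w) i j *
          (fM (w : Multiset (Fin 4)) + phi j - phi i)
      = ∑ i, ((cnt w i : ℝ) / n) * (fM (w : Multiset (Fin 4)) + driftV i) := by
        apply Finset.sum_congr rfl; intro i _; rw [hinner i]
    _ = (∑ i, (cnt w i : ℝ)) / n * fM (w : Multiset (Fin 4))
          + (∑ i, (cnt w i : ℝ) * driftV i) / n := by
        rw [Finset.sum_div, Finset.sum_div, Finset.sum_mul, ← Finset.sum_add_distrib]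
        apply Finset.sum_congr rfl; intro i _; ring
    _ = fM (w : Multiset (Fin 4)) + (∑ i, (cnt w i : ℝ) * driftV i) / n := by
        rw [cnt_total w, div_self (Nat.cast_ne_zero.2 hn.ne'), one_mul]

/-- **Theorem `thm:no-contraction`.**  On the path graph with 4 vertices, with `β = 0`
and the unit-length path metric `ρ` induced by moves along edges of the graph, for the
adjacent configurations `x` and `y = x − e₂ + e₃` (the two middle vertices; `x(2) ≥ 1`)
one has `W_ρ^P(x,y) ≥ 1 = ρ(x,y)`:  no coupling of one step of the two chains strictly
contracts `ρ`. -/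
theorem no_contraction_path_graph (n : ℕ) (x y : Sym (Fin 4) n)
    (hx1 : 1 ≤ cnt x (1 : Fin 4))
    (hxy : (y : Multiset (Fin 4)) =
      (2 : Fin 4) ::ₘ ((x : Multiset (Fin 4)).erase (1 : Fin 4))) :
    1 ≤ wass (arwP pathG4 0 n) (rhoUnit n) x y := by
  have h1mem : (1 : Fin 4) ∈ (x : Multiset (Fin 4)) := Multiset.count_pos.1 hx1
  have hn : 0 < n := by
    have hc := Multiset.card_pos_iff_exists_mem.2 ⟨(1 : Fin 4), h1mem⟩
    rwa [symCard x] at hc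
  have hfMy : fM (y : Multiset (Fin 4)) = fM (x : Multiset (Fin 4)) + 1 := by
    rw [hxy, fM_move _ h1mem]
    have h2 : phi (2 : Fin 4) = 2 := by norm_num [phi]
    have h1 : phi (1 : Fin 4) = 1 := by norm_num [phi]
    rw [h2, h1]; ring
  have hcnt0 : cnt y (0 : Fin 4) = cnt x (0 : Fin 4) := by
    rw [cnt, cnt, hxy, Multiset.count_cons_of_ne (by decide),
      Multiset.count_erase_of_ne (by decide)]
  have hcnt3 : cnt y (3 : Fin 4) = cnt x (3 : Fin 4) := by
    rw [cnt, cnt, hxy, Multiset.count_cons_of_ne (by decide),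
      Multiset.count_erase_of_ne (by decide)]
  have hdrift : ∑ i, (cnt y i : ℝ) * driftV i = ∑ i, (cnt x i : ℝ) * driftV i := by
    rw [Fin.sum_univ_four, Fin.sum_univ_four, hcnt0, hcnt3]
    have hd1 : driftV (1 : Fin 4) = 0 := by norm_num [driftV]
    have hd2 : driftV (2 : Fin 4) = 0 := by rfl
    rw [hd1, hd2]; ring
  have hE : ∑ z : Sym (Fin 4) n, arwP pathG4 0 n y z * fM (z : Multiset (Fin 4))
      = (∑ z : Sym (Fin 4) n, arwP pathG4 0 n x z * fM (z : Multiset (Fin 4))) + 1 := by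
    rw [exp_fM hn x, exp_fM hn y, hfMy, hdrift]; ring
  rw [wass]
  apply le_csInf
  · refine ⟨_, fun a b => arwP pathG4 0 n x a * arwP pathG4 0 n y b,
      fun a b => mul_nonneg (arw_nonneg _ _) (arw_nonneg _ _), ?_, ?_, rfl⟩
    · intro a; rw [← Finset.mul_sum, arw_row hn, mul_one]
    · intro b; rw [← Finset.sum_mul, arw_row hn, one_mul]
  · rintro w ⟨K, hK0, hKx, hKy, rfl⟩
    have hle : ∑ a, ∑ b, K a b * (fM (b : Multiset (Fin 4)) - fM (a : Multiset (Fin 4)))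
        ≤ ∑ a, ∑ b, K a b * rhoUnit n a b :=
      Finset.sum_le_sum (fun a _ => Finset.sum_le_sum (fun b _ =>
        mul_le_mul_of_nonneg_left (rho_lb a b) (hK0 a b)))
    have heq : ∑ a, ∑ b, K a b * (fM (b : Multiset (Fin 4)) - fM (a : Multiset (Fin 4))) = 1 := by
      have e1 : ∑ a, ∑ b, K a b * (fM (b : Multiset (Fin 4)) - fM (a : Multiset (Fin 4)))
          = (∑ a, ∑ b, K a b * fM (b : Multiset (Fin 4)))
            - (∑ a, ∑ b, K a b * fM (a : Multiset (Fin 4))) := by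
        rw [← Finset.sum_sub_distrib]
        apply Finset.sum_congr rfl; intro a _
        rw [← Finset.sum_sub_distrib]
        apply Finset.sum_congr rfl; intro b _; ring
      have e2 : ∑ a, ∑ b, K a b * fM (b : Multiset (Fin 4))
          = ∑ z : Sym (Fin 4) n, arwP pathG4 0 n y z * fM (z : Multiset (Fin 4)) := by
        rw [Finset.sum_comm]
        apply Finset.sum_congr rfl; intro b _
        rw [← Finset.sum_mul, hKy b]
      have e3 : ∑ a, ∑ b, K a b * fM (a : Multiset (Fin 4))
          = ∑ z : Sym (Fin 4) n, arwP pathG4 0 n x z * fM (z : Multiset (Fin 4)) := by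
        apply Finset.sum_congr rfl; intro a _
        rw [← Finset.sum_mul, hKx a]
      rw [e1, e2, e3, hE]; ring
    linarith


end ARW
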